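/- Let A_S be the Artin-Tits group of type H_4 with generators σ_1, σ_2, σ_3, σ_4, and let X = {s_1, s_2, s_3} (a standard parabolic subset of type H_3). Then the elements g = σ_1σ_3σ_3 and h = σ_3σ_1σ_1 are conjugate in A_S but are not conjugate in the standard parabolic subgroup A_X generated by {σ_1, σ_2, σ_3}. In particular, A_X is not conjugacy stable in A_S. -/

import Mathlib

/-!
The conjugator is a product of five ribbons, each read off a single braid relation, which move the
pair `(σ₁, σ₃)` through `(σ₁, σ₄)`, `(σ₂, σ₄)`, `(σ₄, σ₂)`, `(σ₄, σ₁)` to `(σ₃, σ₁)`.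

For the converse, realise the Coxeter group `W` of type `H₄` as a reflection group over `𝔽₁₁`
(which contains a golden ratio) and map `A_S` to `ℤ^W ⋊ W` by `σ_s ↦ (δ_s, s)`; the braid
relations hold there because both sides of a dihedral relation pass through the same reflections.
If `c ∈ A_X` conjugated `σ₁σ₃²` to `σ₃σ₁²`, comparing the multiplicity of `s₃` in the `ℤ^W`-parts
would force the image of `c` in `W_X` to swap `s₁` and `s₃` by conjugation; but the orbit of the
pair `(s₁, s₃)` under `W_X` has 15 elements, none of which is `(s₃, s₁)`.
-/

namespace ArtinTits

variable {B : Type*}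

/-- The alternating product `a b a b ⋯` with `m` factors, starting with `a`. -/
def altProd {G : Type*} [Monoid G] (a b : G) : ℕ → G
  | 0 => 1
  | n + 1 => a * altProd b a n

/-- The braid relations defining the Artin–Tits group of a Coxeter matrix:
`Π(σ_s, σ_t; m_{s,t}) = Π(σ_t, σ_s; m_{s,t})` whenever `m_{s,t} ≠ ∞` (here `∞` is coded by `0`). -/
def artinRelationsSet (M : CoxeterMatrix B) : Set (FreeGroup B) :=
  {r | ∃ s t : B, M s t ≠ 0 ∧
    r = altProd (FreeGroup.of s) (FreeGroup.of t) (M s t) *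
        (altProd (FreeGroup.of t) (FreeGroup.of s) (M s t))⁻¹}

/-- The Artin–Tits group of a Coxeter matrix. -/
abbrev ArtinGroup (M : CoxeterMatrix B) : Type _ := PresentedGroup (artinRelationsSet M)

/-- The standard generator `σ_s` of the Artin–Tits group. -/
def σ (M : CoxeterMatrix B) (s : B) : ArtinGroup M := PresentedGroup.of s

/-- The standard parabolic subgroup `A_X` of the Artin–Tits group. -/
def AP (M : CoxeterMatrix B) (X : Set B) : Subgroup (ArtinGroup M) :=
  Subgroup.closure (σ M '' X)

/-- The standard parabolic subgroup `W_X` of the Coxeter group. -/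
def WP (M : CoxeterMatrix B) (X : Set B) : Subgroup M.Group :=
  Subgroup.closure (M.simple '' X)

/-- A subgroup `H ≤ G` is conjugacy stable if any two elements of `H` which are conjugate
in `G` are already conjugate by an element of `H`. -/
def IsConjugacyStable {G : Type*} [Group G] (H : Subgroup G) : Prop :=
  ∀ a b : G, a ∈ H → b ∈ H → (∃ g : G, g⁻¹ * a * g = b) → ∃ h ∈ H, h⁻¹ * a * h = b

/-- Property `⋆_W` for the pair `(W_X, W_S)`. -/
def StarW (M : CoxeterMatrix B) (X : Set B) : Prop :=
  ∀ Y₁ Y₂ : Set B, Y₁ ⊆ X → Y₂ ⊆ X → ∀ w : M.Group,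
    (fun x => w⁻¹ * x * w) '' (M.simple '' Y₁) = M.simple '' Y₂ →
    ∃ v ∈ WP M X, ∀ y ∈ Y₁, v⁻¹ * M.simple y * v = w⁻¹ * M.simple y * w

/-- Property `⋆_A` for the pair `(A_X, A_S)`. -/
def StarA (M : CoxeterMatrix B) (X : Set B) : Prop :=
  ∀ Y₁ Y₂ : Set B, Y₁ ⊆ X → Y₂ ⊆ X → ∀ g : ArtinGroup M,
    (fun x => g⁻¹ * x * g) '' (σ M '' Y₁) = σ M '' Y₂ →
    ∃ h ∈ AP M X, ∀ y ∈ Y₁, h⁻¹ * σ M y * h = g⁻¹ * σ M y * g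

/-- Adjacency in the Coxeter graph: `s` and `t` are joined by an edge iff `m_{s,t} ≥ 3`
(where the value `0` codes `∞`, which also gives an edge). -/
def Adj (M : CoxeterMatrix B) (s t : B) : Prop := s ≠ t ∧ M s t ≠ 2

/-- `s` and `t` are connected by a path of the Coxeter graph staying inside `X`. -/
def ReachIn (M : CoxeterMatrix B) (X : Set B) (s t : B) : Prop :=
  Relation.ReflTransGen (fun a b => a ∈ X ∧ b ∈ X ∧ Adj M a b) s t

/-- The Coxeter graph induced on `X` is connected. -/
def ConnectedIn (M : CoxeterMatrix B) (X : Set B) : Prop :=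
  ∀ s ∈ X, ∀ t ∈ X, ReachIn M X s t

/-- The Coxeter matrix `M` restricted to `X` is of the type of the Coxeter matrix `M'`,
i.e. there is a bijection transporting one to the other. -/
def IsOfType {B' : Type*} (M : CoxeterMatrix B) (X : Set B) (M' : CoxeterMatrix B') : Prop :=
  ∃ e : X ≃ B', ∀ a b : X, M a.val b.val = M' (e a) (e b)

/-- The Coxeter matrix of type `Bₙ` with the paper's labelling: vertices `0, …, n-1`
(representing `s_1, …, s_n`), `m_{s_1, s_2} = 4` and `m_{s_i, s_{i+1}} = 3` for `i ≥ 2`. -/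
def Bmat (n : ℕ) : CoxeterMatrix (Fin n) where
  M := Matrix.of fun i j : Fin n ↦
    if i = j then 1
      else (if (i.val = 0 ∧ j.val = 1) ∨ (j.val = 0 ∧ i.val = 1) then 4
        else (if (j : ℕ) + 1 = i ∨ (i : ℕ) + 1 = j then 3 else 2))
  isSymm := by unfold Matrix.IsSymm; aesop
  diagonal := by simp
  off_diagonal := by aesop

/-- The Coxeter matrix of type `Dₙ` with the paper's labelling: vertices `0, …, n-1`
(representing `s_1, …, s_n`), with edges `{s_1, s_3}`, `{s_2, s_3}` and `{s_i, s_{i+1}}`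
for `i ≥ 3`, all labelled `3`. -/
def Dmat (n : ℕ) : CoxeterMatrix (Fin n) where
  M := Matrix.of fun i j : Fin n ↦
    if i = j then 1
      else (if (i.val = 0 ∧ j.val = 2) ∨ (j.val = 0 ∧ i.val = 2) then 3
        else (if i.val = 0 ∨ j.val = 0 then 2
          else (if (j : ℕ) + 1 = i ∨ (i : ℕ) + 1 = j then 3 else 2)))
  isSymm := by unfold Matrix.IsSymm; aesop
  diagonal := by simp
  off_diagonal := by aesop

end ArtinTits

namespace ArtinTits

/-- The Coxeter matrix of type `H₄` with the paper's labelling: `m_{s_1,s_2} = 5`,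
`m_{s_2,s_3} = 3`, `m_{s_3,s_4} = 3` (vertices `0, 1, 2, 3` standing for `s_1, s_2, s_3, s_4`). -/
def H4p : CoxeterMatrix (Fin 4) where
  M := !![1, 5, 2, 2;
          5, 1, 3, 2;
          2, 3, 1, 3;
          2, 2, 3, 1]
  off_diagonal := by
    intro i i' h
    fin_cases i <;> fin_cases i' <;> simp_all

section AltProd

variable {G : Type*}

theorem map_altProd {H : Type*} [Monoid G] [Monoid H] (f : G →* H) (a b : G) (n : ℕ) :
    f (altProd a b n) = altProd (f a) (f b) n := by
  induction n generalizing a b with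
  | zero => simp [altProd]
  | succ n ih => simp [altProd, ih]

theorem altProd_two_mul [Monoid G] (a b : G) (k : ℕ) : altProd a b (2 * k) = (a * b) ^ k := by
  induction k with
  | zero => simp [altProd]
  | succ k ih => rw [Nat.mul_succ, pow_succ', ← ih]; simp [altProd, mul_assoc]

theorem altProd_two_mul_add_one [Monoid G] (a b : G) (k : ℕ) :
    altProd a b (2 * k + 1) = a * (b * a) ^ k := by
  rw [altProd, altProd_two_mul]

theorem semiconjBy_pow_of_altProd_eq [Monoid G] {a b : G} {k : ℕ}
    (h : altProd a b (2 * k + 1) = altProd b a (2 * k + 1)) : SemiconjBy ((b * a) ^ k) b a := by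
  rw [altProd_two_mul_add_one, altProd_two_mul_add_one] at h
  rw [SemiconjBy, mul_pow_mul, h]

theorem commute_of_altProd_two_eq [Monoid G] {a b : G} (h : altProd a b 2 = altProd b a 2) :
    Commute a b := by
  simpa [altProd, Commute, SemiconjBy] using h

theorem semiconjBy_of_braid_chain [Monoid G] {a b c : G} (hab : a * b * a = b * a * b)
    (hbc : b * c * b = c * b * c) : SemiconjBy (b * a * c * b) c a :=
  calc b * a * c * b * c = b * a * (b * c * b) := by rw [hbc]; simp only [mul_assoc]
    _ = a * b * a * c * b := by rw [hab]; simp only [mul_assoc]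
    _ = a * (b * a * c * b) := by simp only [mul_assoc]

theorem altProd_eq_pow_mul_altProd [Group G] {a b : G} (ha : a * a = 1) (hb : b * b = 1)
    (n : ℕ) : altProd a b n = (a * b) ^ n * altProd b a n := by
  have hba : b * a = (a * b)⁻¹ := by
    rw [mul_inv_rev, inv_eq_of_mul_eq_one_right ha, inv_eq_of_mul_eq_one_right hb]
  induction n generalizing a b with
  | zero => simp [altProd]
  | succ n ih =>
    have key : a = (a * b) ^ (n + 1) * b * (a * b) ^ n := by
      rw [pow_succ, mul_assoc _ (a * b), mul_assoc a, hb, mul_one, mul_pow_mul, hba, mul_assoc,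
        inv_pow, inv_mul_cancel, mul_one]
    rw [altProd, altProd, ih ha hb hba, ← mul_assoc, ← mul_assoc, ← key]

end AltProd

section ArtinGroup

variable {B : Type*} (M : CoxeterMatrix B)

theorem σ_braid (s t : B) :
    altProd (σ M s) (σ M t) (M s t) = altProd (σ M t) (σ M s) (M s t) := by
  by_cases h : M s t = 0
  · simp [h, altProd]
  · have := PresentedGroup.mk_eq_mk_of_mul_inv_mem (rels := artinRelationsSet M) ⟨s, t, h, rfl⟩
    rwa [map_altProd, map_altProd] at this

theorem σ_commute (s t : B) (h : M s t = 2) : Commute (σ M s) (σ M t) :=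
  commute_of_altProd_two_eq (h ▸ σ_braid M s t)

theorem σ_braid_three (s t : B) (h : M s t = 3) :
    σ M s * σ M t * σ M s = σ M t * σ M s * σ M t := by
  simpa [altProd, h, mul_assoc] using σ_braid M s t

theorem semiconjBy_σ_pow (s t : B) (k : ℕ) (h : M s t = 2 * k + 1) :
    SemiconjBy ((σ M t * σ M s) ^ k) (σ M t) (σ M s) :=
  semiconjBy_pow_of_altProd_eq (h ▸ σ_braid M s t)

variable {M} {G : Type*} [Group G]

def ArtinGroup.lift (f : B → G)
    (hf : ∀ s t, altProd (f s) (f t) (M s t) = altProd (f t) (f s) (M s t)) :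
    ArtinGroup M →* G :=
  PresentedGroup.toGroup (f := f) <| by
    rintro r ⟨s, t, -, rfl⟩
    rw [map_mul, map_inv, mul_inv_eq_one, map_altProd, map_altProd]
    simpa using hf s t

@[simp]
theorem ArtinGroup.lift_σ (f : B → G)
    (hf : ∀ s t, altProd (f s) (f t) (M s t) = altProd (f t) (f s) (M s t)) (s : B) :
    ArtinGroup.lift f hf (σ M s) = f s :=
  PresentedGroup.toGroup.of (f := f) _

theorem map_mem_closure_of_mem_AP (φ : ArtinGroup M →* G) {X : Set B} {c : ArtinGroup M}
    (hc : c ∈ AP M X) : φ c ∈ Subgroup.closure ((fun s => φ (σ M s)) '' X) := by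
  rw [← Set.image_image, ← MonoidHom.map_closure]
  exact Subgroup.mem_map_of_mem φ hc

end ArtinGroup

section ReflectionCocycle

open Finset

variable {G : Type*} [Group G]

abbrev conjFun : G →* MulAut (G → Multiplicative ℤ) :=
  mulAutArrow.comp ConjAct.toConjAct.toMonoidHom

theorem conjFun_apply (g : G) (f : G → Multiplicative ℤ) (x : G) :
    conjFun g f x = f (g⁻¹ * x * g) := by
  change f ((ConjAct.toConjAct g)⁻¹ • x) = _
  rw [ConjAct.smul_def]
  simp

variable [DecidableEq G]

theorem conjFun_mulSingle (g a : G) (v : Multiplicative ℤ) :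
    conjFun g (Pi.mulSingle a v) = Pi.mulSingle (g * a * g⁻¹) v := by
  ext x
  rw [conjFun_apply, Pi.mulSingle_apply, Pi.mulSingle_apply]
  have : g⁻¹ * x * g = a ↔ x = g * a * g⁻¹ := by
    constructor <;> rintro rfl <;> group
  simp only [this]

def reflectionLift (a : G) : (G → Multiplicative ℤ) ⋊[conjFun] G :=
  ⟨Pi.mulSingle a (.ofAdd 1), a⟩

local notation "ι" => reflectionLift

theorem altProd_reflectionLift {a b : G} (ha : a * a = 1) (hb : b * b = 1) (n : ℕ) :
    altProd (ι a) (ι b) n =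
      ⟨∏ k ∈ range n, Pi.mulSingle ((a * b) ^ k * a) (.ofAdd 1), altProd a b n⟩ := by
  induction n generalizing a b with
  | zero => rfl
  | succ n ih =>
    have hconj (k : ℕ) : a * ((b * a) ^ k * b) * a⁻¹ = (a * b) ^ (k + 1) * a := by
      rw [inv_eq_of_mul_eq_one_right ha, ← mul_assoc, ← mul_pow_mul, pow_succ]
      simp only [mul_assoc]
    rw [altProd, ih hb ha]
    ext : 1
    · simp only [SemidirectProduct.mul_left, reflectionLift, map_prod, conjFun_mulSingle, hconj,
        prod_range_succ' _ n, pow_zero, one_mul, mul_comm]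
    · rfl

theorem reflectionLift_braid {a b : G} (ha : a * a = 1) (hb : b * b = 1) {m : ℕ}
    (hm : (a * b) ^ m = 1) : altProd (ι a) (ι b) m = altProd (ι b) (ι a) m := by
  have hba : b * a = (a * b)⁻¹ := by
    rw [mul_inv_rev, inv_eq_of_mul_eq_one_right ha, inv_eq_of_mul_eq_one_right hb]
  have hrefl {k : ℕ} (hk : k < m) : (a * b) ^ (m - 1 - k) * a = (b * a) ^ k * b := by
    have : (a * b) ^ (m - 1 - k) = ((a * b) ^ (k + 1))⁻¹ := by
      rw [eq_inv_iff_mul_eq_one, ← pow_add, show m - 1 - k + (k + 1) = m by omega, hm]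
    rw [this, ← inv_pow, ← hba, pow_succ, mul_assoc, mul_assoc, ha, mul_one]
  rw [altProd_reflectionLift ha hb, altProd_reflectionLift hb ha]
  ext : 1
  · rw [← prod_range_reflect]
    exact prod_congr rfl fun k hk => congrArg (Pi.mulSingle · _) (hrefl (mem_range.mp hk))
  · rw [altProd_eq_pow_mul_altProd ha hb, hm, one_mul]

theorem reflectionLift_mul_sq {a b : G} (hb : b * b = 1) (hab : Commute a b) :
    ι a * ι b * ι b = ⟨Pi.mulSingle a (.ofAdd 1) * Pi.mulSingle b (.ofAdd 2), a⟩ := by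
  have hconj : a * b * a⁻¹ = b := by rw [hab.eq, mul_inv_cancel_right]
  have hconj' : a * b * b * (a * b)⁻¹ = b := by
    rw [(hab.mul_left (Commute.refl b)).eq, mul_inv_cancel_right]
  ext : 1
  · simp only [SemidirectProduct.mul_left, SemidirectProduct.mul_right, reflectionLift,
      conjFun_mulSingle, hconj, hconj']
    rw [mul_assoc, ← Pi.mulSingle_mul]
    rfl
  · simp [reflectionLift, mul_assoc, hb]

theorem conj_swap_of_conj_reflectionLift {a b : G} (ha : a * a = 1) (hb : b * b = 1)
    (hab : Commute a b) (hne : a ≠ b) {x : (G → Multiplicative ℤ) ⋊[conjFun] G}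
    (h : x⁻¹ * (ι a * ι b * ι b) * x = ι b * ι a * ι a) :
    x.right⁻¹ * a * x.right = b ∧ x.right⁻¹ * b * x.right = a := by
  rw [mul_assoc, inv_mul_eq_iff_eq_mul, reflectionLift_mul_sq hb hab,
    reflectionLift_mul_sq ha hab.symm] at h
  have hw : a * x.right = x.right * b := congrArg SemidirectProduct.right h
  -- at `b` the `ℤ`-parts are `2` on the left and `[w⁻¹bw = b] + 2 [w⁻¹bw = a]` on the right,
  -- where `w = x.right`
  have hcount := congrFun (congrArg SemidirectProduct.left h) b
  have hb_fixed : a⁻¹ * b * a = b := by rw [mul_assoc, ← hab.eq, inv_mul_cancel_left]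
  simp only [SemidirectProduct.mul_left, Pi.mul_apply, conjFun_apply, hb_fixed,
    Pi.mulSingle_apply, if_neg hne.symm, if_true, one_mul, mul_comm (x.left b),
    mul_left_inj] at hcount
  refine ⟨by rw [mul_assoc, hw, inv_mul_cancel_left], ?_⟩
  by_contra hy
  rw [if_neg hy] at hcount
  split_ifs at hcount <;> exact absurd hcount (by decide)

end ReflectionCocycle

theorem conj_mem_of_mem_closure {G : Type*} [Group G] {s : Set G} (hs : ∀ t ∈ s, t * t = 1)
    {Q : Set (G × G)} (hQ : ∀ t ∈ s, ∀ p ∈ Q, (t * p.1 * t, t * p.2 * t) ∈ Q)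
    {v : G} (hv : v ∈ Subgroup.closure s) {p : G × G} (hp : p ∈ Q) :
    (v⁻¹ * p.1 * v, v⁻¹ * p.2 * v) ∈ Q := by
  induction hv using Subgroup.closure_induction_right with
  | one => simpa using hp
  | mul_right x _ t ht ih =>
    simpa [mul_assoc, inv_eq_of_mul_eq_one_right (hs t ht)] using hQ t ht _ ih
  | mul_inv_cancel x _ t ht ih =>
    simpa [mul_assoc, inv_eq_of_mul_eq_one_right (hs t ht)] using hQ t ht _ ih

section H4Reflections

open Matrix

-- Twice the Gram matrix of the simple roots; `-8` stands for `-2 cos (π / 5)`, as `8` is a root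
-- of `X ^ 2 = X + 1` modulo `11`.
def h4Cartan : Matrix (Fin 4) (Fin 4) (ZMod 11) :=
  !![2, -8, 0, 0; -8, 2, -1, 0; 0, -1, 2, -1; 0, 0, -1, 2]

def rootReflection (α : Fin 4 → ZMod 11) : Matrix (Fin 4) (Fin 4) (ZMod 11) :=
  1 - vecMulVec α (α ᵥ* h4Cartan)

theorem rootReflection_single_mul_self : ∀ i : Fin 4,
    rootReflection (Pi.single i 1) * rootReflection (Pi.single i 1) = 1 := by
  decide +kernel

def h4Refl (i : Fin 4) : GL (Fin 4) (ZMod 11) :=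
  ⟨rootReflection (Pi.single i 1), rootReflection (Pi.single i 1),
    rootReflection_single_mul_self i, rootReflection_single_mul_self i⟩

theorem h4Refl_mul_self (i : Fin 4) : h4Refl i * h4Refl i = 1 :=
  Units.ext (rootReflection_single_mul_self i)

theorem rootReflection_single_mul_pow_coxeter : ∀ i j : Fin 4,
    (rootReflection (Pi.single i 1) * rootReflection (Pi.single j 1)) ^ H4p i j = 1 := by
  decide +kernel

theorem h4Refl_mul_pow_coxeter (i j : Fin 4) : (h4Refl i * h4Refl j) ^ H4p i j = 1 :=
  Units.ext (rootReflection_single_mul_pow_coxeter i j)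

theorem h4Refl_commute_zero_two : Commute (h4Refl 0) (h4Refl 2) :=
  Units.ext (by decide +kernel)

theorem h4Refl_zero_ne_two : h4Refl 0 ≠ h4Refl 2 :=
  fun h => absurd (congrArg Units.val h) (by decide +kernel)

def h4ReflectionRep :
    ArtinGroup H4p →* (GL (Fin 4) (ZMod 11) → Multiplicative ℤ) ⋊[conjFun] GL (Fin 4) (ZMod 11) :=
  ArtinGroup.lift (fun i => reflectionLift (h4Refl i)) fun i j =>
    reflectionLift_braid (h4Refl_mul_self i) (h4Refl_mul_self j) (h4Refl_mul_pow_coxeter i j)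

-- The orbit of the pair of reflections `(h4Refl 0, h4Refl 2)` under conjugation by
-- `h4Refl 0`, `h4Refl 1`, `h4Refl 2`, each reflection given by one of its roots.
def h3OrbitRoots : List ((Fin 4 → ZMod 11) × (Fin 4 → ZMod 11)) :=
  [(Pi.single 0 1, Pi.single 2 1),
   (![1, -3, 0, 0], ![0, 1, 1, 0]),
   (![3, 3, 0, 0], ![3, -1, -1, 0]),
   (![1, -3, -3, 0], ![0, 1, 0, 0]),
   (![3, -1, 0, 0], ![3, 2, -1, 0]),
   (![3, 3, 3, 0], ![3, -1, 0, 0]),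
   (![0, 1, 0, 0], ![2, 2, -1, 0]),
   (![3, -1, -1, 0], ![3, 2, 3, 0]),
   (![3, 2, 3, 0], ![3, 3, 0, 0]),
   (![0, 1, 1, 0], ![2, 2, 3, 0]),
   (![3, 2, -1, 0], ![3, 3, 3, 0]),
   (![2, 2, 3, 0], ![1, -3, 0, 0]),
   (![0, 0, 1, 0], ![2, -5, 3, 0]),
   (![2, 2, -1, 0], ![1, -3, -3, 0]),
   (![2, -5, 3, 0], ![1, 0, 0, 0])]

theorem h3OrbitRoots_conj_closed : ∀ p ∈ h3OrbitRoots, ∀ i ∈ ({0, 1, 2} : Set (Fin 4)),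
    ∃ q ∈ h3OrbitRoots,
      (h4Refl i).val * rootReflection p.1 * (h4Refl i).val = rootReflection q.1 ∧
      (h4Refl i).val * rootReflection p.2 * (h4Refl i).val = rootReflection q.2 := by
  have h : h3OrbitRoots.all (fun p => [0, 1, 2].all fun i => h3OrbitRoots.any fun q =>
      (h4Refl i).val * rootReflection p.1 * (h4Refl i).val = rootReflection q.1 ∧
      (h4Refl i).val * rootReflection p.2 * (h4Refl i).val = rootReflection q.2) := by
    decide +kernel
  simp only [List.all_eq_true, List.any_eq_true, decide_eq_true_eq] at h
  intro p hp i hi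
  exact h p hp i (by simpa using hi)

theorem h3OrbitRoots_not_swap : ∀ q ∈ h3OrbitRoots,
    ¬ (rootReflection q.1 = (h4Refl 2).val ∧ rootReflection q.2 = (h4Refl 0).val) := by
  have h : h3OrbitRoots.all (fun q =>
      !(decide (rootReflection q.1 = (h4Refl 2).val ∧ rootReflection q.2 = (h4Refl 0).val))) := by
    decide +kernel
  simpa only [List.all_eq_true, Bool.not_eq_true', decide_eq_false_iff_not] using h

theorem h4Refl_not_swap_of_mem_closure {v : GL (Fin 4) (ZMod 11)}
    (hv : v ∈ Subgroup.closure (h4Refl '' {0, 1, 2})) :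
    ¬ (v⁻¹ * h4Refl 0 * v = h4Refl 2 ∧ v⁻¹ * h4Refl 2 * v = h4Refl 0) := by
  let Q : Set (GL (Fin 4) (ZMod 11) × GL (Fin 4) (ZMod 11)) :=
    {p | ∃ q ∈ h3OrbitRoots, p.1.val = rootReflection q.1 ∧ p.2.val = rootReflection q.2}
  have hQ : ∀ t ∈ h4Refl '' {0, 1, 2}, ∀ p ∈ Q, (t * p.1 * t, t * p.2 * t) ∈ Q := by
    rintro _ ⟨i, hi, rfl⟩ p ⟨q, hq, h1, h2⟩
    obtain ⟨q', hq', e1, e2⟩ := h3OrbitRoots_conj_closed q hq i hi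
    exact ⟨q', hq', by simp [h1, e1], by simp [h2, e2]⟩
  have hstart : (h4Refl 0, h4Refl 2) ∈ Q := ⟨_, List.mem_cons_self, rfl, rfl⟩
  rintro ⟨h02, h20⟩
  obtain ⟨q, hq, h1, h2⟩ := conj_mem_of_mem_closure
    (by rintro _ ⟨i, -, rfl⟩; exact h4Refl_mul_self i) hQ hv hstart
  simp only [h02, h20] at h1 h2
  exact h3OrbitRoots_not_swap q hq ⟨h1.symm, h2.symm⟩

end H4Reflections

local notation "s" => σ H4p

theorem exists_semiconjBy_swap_σ_zero_two :
    ∃ c : ArtinGroup H4p, SemiconjBy c (s 2) (s 0) ∧ SemiconjBy c (s 0) (s 2) := by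
  have c02 := σ_commute H4p 0 2 rfl
  have c03 := σ_commute H4p 0 3 rfl
  have c13 := σ_commute H4p 1 3 rfl
  have r23 := semiconjBy_σ_pow H4p 2 3 1 rfl
  have r01 := semiconjBy_σ_pow H4p 0 1 2 rfl
  have r10 := semiconjBy_σ_pow H4p 1 0 2 rfl
  have r32 := semiconjBy_σ_pow H4p 3 2 1 rfl
  have b12 := σ_braid_three H4p 1 2 rfl
  have b23 := σ_braid_three H4p 2 3 rfl
  have r13 : SemiconjBy (s 2 * s 1 * s 3 * s 2) (s 3) (s 1) := semiconjBy_of_braid_chain b12 b23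
  have r31 : SemiconjBy (s 2 * s 1 * s 3 * s 2) (s 1) (s 3) := by
    rw [mul_assoc (s 2), c13.eq, ← mul_assoc]
    exact semiconjBy_of_braid_chain b23.symm b12.symm
  have h1 : Commute ((s 3 * s 2) ^ 1) (s 0) := (c03.symm.mul_left c02.symm).pow_left 1
  have h2 : Commute ((s 1 * s 0) ^ 2) (s 3) := (c13.mul_left c03).pow_left 2
  have h4 : Commute ((s 0 * s 1) ^ 2) (s 3) := (c03.mul_left c13).pow_left 2
  have h5 : Commute ((s 2 * s 3) ^ 1) (s 0) := (c02.symm.mul_left c03.symm).pow_left 1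
  refine ⟨(s 3 * s 2) ^ 1 * (s 1 * s 0) ^ 2 * (s 2 * s 1 * s 3 * s 2) * (s 0 * s 1) ^ 2 *
    (s 2 * s 3) ^ 1, ?_, ?_⟩
  · exact .mul_left (.mul_left (.mul_left (.mul_left h1 r01) r13) h4) r32
  · exact .mul_left (.mul_left (.mul_left (.mul_left r23 h2) r31) r10) h5

theorem not_exists_mem_AP_conj : ¬ ∃ c ∈ AP H4p ({0, 1, 2} : Set (Fin 4)),
    c⁻¹ * (s 0 * s 2 * s 2) * c = s 2 * s 0 * s 0 := by
  rintro ⟨c, hc, hconj⟩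
  have hswap := conj_swap_of_conj_reflectionLift (h4Refl_mul_self 0) (h4Refl_mul_self 2)
    h4Refl_commute_zero_two h4Refl_zero_ne_two (x := h4ReflectionRep c)
    (by simpa [h4ReflectionRep] using congrArg h4ReflectionRep hconj)
  have hmem := map_mem_closure_of_mem_AP (SemidirectProduct.rightHom.comp h4ReflectionRep) hc
  simp only [h4ReflectionRep, MonoidHom.coe_comp, SemidirectProduct.rightHom_eq_right,
    Function.comp_apply, ArtinGroup.lift_σ] at hmem
  exact h4Refl_not_swap_of_mem_closure hmem hswap

/-- Counterexample (e) of the paper: in the Artin–Tits group of type `H₄`, the elements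
`g = σ_1 σ_3 σ_3` and `h = σ_3 σ_1 σ_1` of the standard parabolic subgroup of type `H₃` on
`{s_1, s_2, s_3}` are conjugate in `A_S` but not in `A_X`; in particular `A_X` is not
conjugacy stable in `A_S`. -/
theorem H4_H3_not_conjugacy_stable :
    (∃ c : ArtinGroup H4p,
        c⁻¹ * (σ H4p 0 * σ H4p 2 * σ H4p 2) * c = σ H4p 2 * σ H4p 0 * σ H4p 0) ∧
    (¬ ∃ c ∈ AP H4p ({0, 1, 2} : Set (Fin 4)),
        c⁻¹ * (σ H4p 0 * σ H4p 2 * σ H4p 2) * c = σ H4p 2 * σ H4p 0 * σ H4p 0) ∧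
    ¬ IsConjugacyStable (AP H4p ({0, 1, 2} : Set (Fin 4))) := by
  obtain ⟨c, h20, h02⟩ := exists_semiconjBy_swap_σ_zero_two
  have hconj : c⁻¹ * (s 0 * s 2 * s 2) * c = s 2 * s 0 * s 0 := by
    rw [mul_assoc, inv_mul_eq_iff_eq_mul]
    exact ((h20.mul_right h02).mul_right h02).eq.symm
  have h0 : s 0 ∈ AP H4p {0, 1, 2} := Subgroup.subset_closure ⟨0, by simp, rfl⟩
  have h2 : s 2 ∈ AP H4p {0, 1, 2} := Subgroup.subset_closure ⟨2, by simp, rfl⟩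
  refine ⟨⟨c, hconj⟩, not_exists_mem_AP_conj, fun hstable => not_exists_mem_AP_conj ?_⟩
  exact hstable _ _ (mul_mem (mul_mem h0 h2) h2) (mul_mem (mul_mem h2 h0) h0) ⟨c, hconj⟩

end ArtinTits
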